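/- Let 0 < s < 1. Assume the standing assumptions, that X satisfies the 1-chain condition, and that μ satisfies the reverse doubling condition with exponent η = s. Let 1 ≤ t < ∞. Then there is a constant C > 0 such that for every f ∈ Lip_0(X) and every x ∈ X one has |f(x)| ≤ C·I_s(g)(x), where g(y) = (∫_X |f(y)−f(z)|^t / (d(y,z)^{st} μ(B(y,d(y,z)))) dμ(z))^{1/t} for y ∈ X, and C is independent of f and x. -/

import Mathlib

open MeasureTheory Metric Set
open scoped ENNReal NNReal

namespace ApDistance

noncomputable section

variable {X : Type*} [MetricSpace X] [MeasurableSpace X] [BorelSpace X]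

/-- All balls of positive radius have positive and finite measure. -/
def BallsPosFinite (μ : Measure X) : Prop :=
  ∀ (x : X) (r : ℝ), 0 < r → 0 < μ (ball x r) ∧ μ (ball x r) < ∞

/-- The measure `μ` is doubling with constant `C`. -/
def DoublingWith (μ : Measure X) (C : ℝ) : Prop :=
  ∀ (x : X) (r : ℝ), 0 < r → μ (ball x (2 * r)) ≤ ENNReal.ofReal C * μ (ball x r)

/-- The measure `μ` is doubling. -/
def Doubling (μ : Measure X) : Prop :=
  ∃ C : ℝ, 0 < C ∧ DoublingWith μ C

/-- The (quantitative) reverse doubling condition with exponent `η`. -/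
def ReverseDoubling (μ : Measure X) (η : ℝ) : Prop :=
  ∃ C : ℝ, 0 < C ∧ ∀ (x y : X) (r R : ℝ), 0 < r → 0 < R → ball y r ⊆ ball x R →
    μ (ball y r) ≤ ENNReal.ofReal (C * (r / R) ^ η) * μ (ball x R)

/-- Standing assumptions (S1)-(S2): `X` is unbounded, points have measure zero,
and all annuli are nonempty. -/
def StandingAssumptions (μ : Measure X) : Prop :=
  ¬ Bornology.IsBounded (univ : Set X) ∧ (∀ x : X, μ {x} = 0) ∧
    ∀ (x : X) (r R : ℝ), 0 < r → r < R → (ball x R \ ball x r).Nonempty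

/-- Ahlfors `Q`-regularity of the metric measure space. -/
def AhlforsRegular (μ : Measure X) (Q : ℝ) : Prop :=
  ∃ C : ℝ, 1 ≤ C ∧ ∀ (x : X) (r : ℝ), 0 < r → ENNReal.ofReal r < EMetric.diam (univ : Set X) →
    ENNReal.ofReal (C⁻¹ * r ^ Q) ≤ μ (ball x r) ∧ μ (ball x r) ≤ ENNReal.ofReal (C * r ^ Q)

/-- The set of admissible exponents in the definition of the (upper) Assouad dimension:
`E ∩ B(x,R)` can be covered by at most `C (R/r)^s` balls of radius `r`. -/
def assouadDimBddSet (E : Set X) : Set ℝ :=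
  {s : ℝ | 0 ≤ s ∧ ∃ C : ℝ, 1 ≤ C ∧ ∀ x ∈ E, ∀ r R : ℝ, 0 < r → r < R →
    ENNReal.ofReal R < 2 * EMetric.diam (univ : Set X) →
    ∃ F : Finset X, (F.card : ℝ) ≤ C * (R / r) ^ s ∧ E ∩ ball x R ⊆ ⋃ y ∈ F, ball y r}

/-- The (upper) Assouad dimension of a set `E`. -/
def assouadDim (E : Set X) : ℝ := sInf (assouadDimBddSet E)

/-- The set of admissible exponents in the definition of the lower Assouad codimension. -/
def assouadCodimBddSet (μ : Measure X) (E : Set X) : Set ℝ :=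
  {ρ : ℝ | 0 ≤ ρ ∧ ∃ C : ℝ, 1 ≤ C ∧ ∀ x ∈ E, ∀ r R : ℝ, 0 < r → r < R →
    ENNReal.ofReal R < 2 * EMetric.diam (univ : Set X) →
    μ ({y : X | infDist y E < r} ∩ ball x R) ≤
      ENNReal.ofReal (C * (r / R) ^ ρ) * μ (ball x R)}

/-- The lower Assouad codimension of a set `E` with respect to `μ`. -/
def assouadCodim (μ : Measure X) (E : Set X) : ℝ := sSup (assouadCodimBddSet μ E)

/-- Porosity of a set `E ⊆ X`. -/
def IsPorous (E : Set X) : Prop :=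
  ∃ c : ℝ, 0 < c ∧ c < 1 ∧ ∀ x ∈ E, ∀ r : ℝ, 0 < r →
    ENNReal.ofReal r < 2 * EMetric.diam (univ : Set X) →
    ∃ y : X, ball y (c * r) ⊆ ball x r \ E

/-- A weight: measurable, a.e. positive and finite, locally integrable on balls. -/
def IsWeight (μ : Measure X) (w : X → ℝ≥0∞) : Prop :=
  Measurable w ∧ (∀ᵐ x ∂μ, 0 < w x ∧ w x ≠ ∞) ∧
    ∀ (x : X) (r : ℝ), 0 < r → ∫⁻ y in ball x r, w y ∂μ ≠ ∞

/-- Membership in the Muckenhoupt class `A_p`, `1 < p < ∞`. -/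
def MemAp (μ : Measure X) (w : X → ℝ≥0∞) (p : ℝ) : Prop :=
  IsWeight μ w ∧ ∃ A : ℝ, 0 < A ∧ ∀ (x : X) (r : ℝ), 0 < r →
    ((∫⁻ y in ball x r, w y ∂μ) / μ (ball x r)) *
      ((∫⁻ y in ball x r, w y ^ (-(1 / (p - 1))) ∂μ) / μ (ball x r)) ^ (p - 1) ≤
      ENNReal.ofReal A

/-- Membership in the Muckenhoupt class `A_1`. -/
def MemA1 (μ : Measure X) (w : X → ℝ≥0∞) : Prop :=
  IsWeight μ w ∧ ∃ A : ℝ, 0 < A ∧ ∀ (x : X) (r : ℝ), 0 < r →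
    ((∫⁻ y in ball x r, w y ∂μ) / μ (ball x r)) *
      essSup (fun y => (w y)⁻¹) (μ.restrict (ball x r)) ≤ ENNReal.ofReal A

/-- Membership in the Muckenhoupt class `A_∞`. -/
def MemAinfty (μ : Measure X) (w : X → ℝ≥0∞) : Prop :=
  IsWeight μ w ∧ ∃ C d : ℝ, 0 < C ∧ 0 < d ∧ ∀ (x : X) (r : ℝ), 0 < r →
    ∀ F : Set X, MeasurableSet F → F ⊆ ball x r →
      ∫⁻ y in F, w y ∂μ ≤
        ENNReal.ofReal C * (μ F / μ (ball x r)) ^ d * ∫⁻ y in ball x r, w y ∂μ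

/-- The weight `w = δ_E^{-α} = dist(·,E)^{-α}` (with values in `ℝ≥0∞`). -/
def distWeight (E : Set X) (α : ℝ) : X → ℝ≥0∞ :=
  fun x => ENNReal.ofReal (infDist x E) ^ (-α)

/-- The Aikawa condition with exponent `α` and constant `C`. -/
def AikawaCondition (μ : Measure X) (E : Set X) (α C : ℝ) : Prop :=
  ∀ x ∈ E, ∀ r : ℝ, 0 < r → ENNReal.ofReal r < 2 * EMetric.diam (univ : Set X) →
    ∫⁻ y in ball x r, ENNReal.ofReal (infDist y E) ^ (-α) ∂μ ≤
      ENNReal.ofReal (C * r ^ (-α)) * μ (ball x r)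

/-- The Riesz potential `I_s f`. -/
def rieszPotential (μ : Measure X) (s : ℝ) (f : X → ℝ≥0∞) (x : X) : ℝ≥0∞ :=
  ∫⁻ y, f y * ENNReal.ofReal (dist x y ^ s) / μ (ball x (dist x y)) ∂μ

/-- `Lip_0(X)`: Lipschitz functions vanishing outside some ball. -/
def MemLip0 (f : X → ℝ) : Prop :=
  (∃ K : ℝ≥0, LipschitzWith K f) ∧ ∃ (x : X) (r : ℝ), ∀ y : X, y ∉ ball x r → f y = 0

/-- The `λ`-chain condition. -/
def ChainCondition (X : Type*) [MetricSpace X] (lam : ℝ) : Prop :=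
  ∃ M : ℝ, 1 ≤ M ∧ ∀ (x : X) (r R : ℝ), 0 < r → r < R →
    ∃ (k : ℕ) (c : ℕ → X) (ρ : ℕ → ℝ),
      (∀ i ≤ k, 0 < ρ i) ∧
      ball (c 0) (lam * ρ 0) ⊆ (ball x R)ᶜ ∧
      ball (c k) (lam * ρ k) ⊆ ball x r ∧
      (∀ i ≤ k,
        M⁻¹ * Metric.diam (ball (c i) (lam * ρ i)) ≤ infDist x (ball (c i) (lam * ρ i)) ∧
        infDist x (ball (c i) (lam * ρ i)) ≤ M * Metric.diam (ball (c i) (lam * ρ i))) ∧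
      (∀ i < k, ∃ (z : X) (t : ℝ), 0 < t ∧
        ball z t ⊆ ball (c i) (ρ i) ∩ ball (c (i + 1)) (ρ (i + 1)) ∧
        ball (c i) (ρ i) ∪ ball (c (i + 1)) (ρ (i + 1)) ⊆ ball z (M * t)) ∧
      (∀ y : X, (({i : ℕ | i ≤ k ∧ y ∈ ball (c i) (lam * ρ i)}).ncard : ℝ) ≤ M)

/-- The inner integral appearing in fractional Hardy–Sobolev inequalities:
`y ↦ ∫_X |f(y)-f(z)|^t / (d(y,z)^{st} μ(B(y,d(y,z)))) dμ(z)`. -/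
def fracEnergyKernel (μ : Measure X) (s t : ℝ) (f : X → ℝ) (y : X) : ℝ≥0∞ :=
  ∫⁻ z, ENNReal.ofReal (|f y - f z| ^ t) /
    (ENNReal.ofReal (dist y z ^ (s * t)) * μ (ball y (dist y z))) ∂μ

/-!
Chaining. For small `r > 0`, the `1`-chain condition joins the complement of `B(x, R)`, where
`f` vanishes, to `B(x, r)` by balls `B₀, …, B_k`. Telescoping the averages `f_{B_i}` gives
`|f x| ≤ |f x - f_{B_k}| + ∑ |f_{B_i} - f_{B_{i+1}}|`; the first term is at most `Lip f · r`, and,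
by doubling on the ball `R_i ⊆ B_i ∩ B_{i+1}`, each difference is controlled by the mean
oscillations of `f` on `B_i` and `B_{i+1}`.

On a ball `B`, Jensen's inequality and doubling give `|f y - f_B| ≲ diam(B)^s g(y)` for `y ∈ B`.
Since the distance from `x` to `B` is comparable to `diam B`, we have
`diam(B)^s / μ(B) ≲ d(x,y)^s / μ(B(x, d(x,y)))` on `B`, so the mean oscillation on `B` is bounded
by the integral over `B` of the Riesz integrand of `g`. Bounded overlap of the chain turns the
sum over the chain into `≲ I_s g(x)`, and we let `r → 0`.
-/

theorem ENNReal.inv_le_div_of_le_mul {a b c : ℝ≥0∞} (ha0 : a ≠ 0) (ha : a ≠ ∞) (hb0 : b ≠ 0)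
    (hb : b ≠ ∞) (h : b ≤ c * a) : a⁻¹ ≤ c / b := by
  rw [ENNReal.le_div_iff_mul_le (Or.inl hb0) (Or.inl hb)]
  calc a⁻¹ * b ≤ a⁻¹ * (c * a) := by gcongr
    _ = c := by rw [mul_comm c, ← mul_assoc, ENNReal.inv_mul_cancel ha0 ha, one_mul]

theorem ENNReal.sum_range_add_succ_le_two_mul (a : ℕ → ℝ≥0∞) (k : ℕ) :
    ∑ i ∈ Finset.range k, (a i + a (i + 1)) ≤ 2 * ∑ i ∈ Finset.range (k + 1), a i := by
  rw [Finset.sum_add_distrib, two_mul]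
  refine add_le_add (Finset.sum_le_sum_of_subset (Finset.range_subset_range.mpr k.le_succ)) ?_
  rw [Finset.sum_range_succ' a k]
  exact le_self_add

theorem ENNReal.le_of_forall_le_coe_mul_ofReal_add {a b : ℝ≥0∞} {K : ℝ≥0} {R : ℝ} (hR : 0 < R)
    (h : ∀ r, 0 < r → r < R → a ≤ K * ENNReal.ofReal r + b) : a ≤ b := by
  have hlim : Filter.Tendsto (fun r => (K : ℝ≥0∞) * ENNReal.ofReal r + b)
      (nhdsWithin 0 (Ioi 0)) (nhds b) := by
    have := (ENNReal.Tendsto.const_mul (ENNReal.continuous_ofReal.tendsto 0)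
      (Or.inr (ENNReal.coe_ne_top (r := K)))).add_const b
    simpa using this.mono_left nhdsWithin_le_nhds
  refine ge_of_tendsto hlim ?_
  filter_upwards [Ioo_mem_nhdsGT hR] with r hr using h r hr.1 hr.2

section Average

variable {α : Type*} [MeasurableSpace α] {μ : Measure α} {s : Set α}

theorem edist_setAverage_le {E : Type*} [NormedAddCommGroup E] [NormedSpace ℝ E]
    [CompleteSpace E] (h0 : μ s ≠ 0) (hs : μ s ≠ ∞) {g : α → E} (hg : IntegrableOn g s μ)
    (c : E) : edist c (⨍ y in s, g y ∂μ) ≤ ⨍⁻ y in s, edist c (g y) ∂μ := by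
  have : IsFiniteMeasure (μ.restrict s) := ⟨by simpa using hs.lt_top⟩
  have : NeZero (μ.restrict s) := ⟨by simpa using h0⟩
  have hsub : c - ⨍ y in s, g y ∂μ = ⨍ y in s, (c - g y) ∂μ := by
    simp only [average_eq']
    rw [integral_sub (integrable_const c) hg.to_average, integral_const, probReal_univ, one_smul]
  rw [edist_eq_enorm_sub, hsub, average_eq', laverage_eq']
  simpa only [edist_eq_enorm_sub] using enorm_integral_le_lintegral_enorm _

theorem setLAverage_le_setLAverage_rpow (h0 : μ s ≠ 0) (hs : μ s ≠ ∞) {φ : α → ℝ≥0∞}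
    (hφ : AEMeasurable φ (μ.restrict s)) {t : ℝ} (ht : 1 ≤ t) :
    ⨍⁻ y in s, φ y ∂μ ≤ (⨍⁻ y in s, φ y ^ t ∂μ) ^ (1 / t) := by
  have : IsFiniteMeasure (μ.restrict s) := ⟨by simpa using hs.lt_top⟩
  have : NeZero (μ.restrict s) := ⟨by simpa using h0⟩
  have ht0 : 0 < t := zero_lt_one.trans_le ht
  have hLp := eLpNorm_le_eLpNorm_of_exponent_le (μ := (μ.restrict s univ)⁻¹ • μ.restrict s)
    (p := 1) (q := ENNReal.ofReal t) (by simpa using ht)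
    (hφ.smul_measure _).aestronglyMeasurable
  rwa [eLpNorm_one_eq_lintegral_enorm, eLpNorm_eq_lintegral_rpow_enorm_toReal
    (by simpa using ht0) ENNReal.ofReal_ne_top, ENNReal.toReal_ofReal ht0.le] at hLp

theorem setLAverage_le_div_mul_setLAverage {u : Set α} (hsu : s ⊆ u) (hu0 : μ u ≠ 0)
    (hu : μ u ≠ ∞) (φ : α → ℝ≥0∞) :
    ⨍⁻ y in s, φ y ∂μ ≤ μ u / μ s * ⨍⁻ y in u, φ y ∂μ := by
  rw [setLAverage_eq, setLAverage_eq]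
  calc (∫⁻ y in s, φ y ∂μ) / μ s ≤ (∫⁻ y in u, φ y ∂μ) / μ s := by gcongr
    _ = μ u / μ s * ((∫⁻ y in u, φ y ∂μ) / μ u) := by
        simp only [div_eq_mul_inv]
        rw [show μ u * (μ s)⁻¹ * ((∫⁻ y in u, φ y ∂μ) * (μ u)⁻¹) =
          μ u * (μ u)⁻¹ * ((∫⁻ y in u, φ y ∂μ) * (μ s)⁻¹) by ring,
          ENNReal.mul_inv_cancel hu0 hu, one_mul]

theorem sum_lintegral_le_lintegral_sum {ι : Type*} (I : Finset ι) (F : ι → α → ℝ≥0∞) :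
    ∑ i ∈ I, ∫⁻ y, F i y ∂μ ≤ ∫⁻ y, ∑ i ∈ I, F i y ∂μ := by
  induction I using Finset.cons_induction with
  | empty => simp
  | cons j I hj ih =>
    simp only [Finset.sum_cons]
    exact (add_le_add le_rfl ih).trans (le_lintegral_add _ _)

open Classical in
theorem sum_setLIntegral_le_mul_lintegral {α ι : Type*} [MeasurableSpace α] {μ : Measure α}
    (I : Finset ι) {B : ι → Set α} (hB : ∀ i ∈ I, MeasurableSet (B i)) {N : ℝ≥0}
    (hN : ∀ y, ((I.filter fun i => y ∈ B i).card : ℝ≥0∞) ≤ N) (h : α → ℝ≥0∞) :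
    ∑ i ∈ I, ∫⁻ y in B i, h y ∂μ ≤ N * ∫⁻ y, h y ∂μ := by
  calc ∑ i ∈ I, ∫⁻ y in B i, h y ∂μ = ∑ i ∈ I, ∫⁻ y, (B i).indicator h y ∂μ :=
        Finset.sum_congr rfl fun i hi => (lintegral_indicator (hB i hi) h).symm
    _ ≤ ∫⁻ y, ∑ i ∈ I, (B i).indicator h y ∂μ := sum_lintegral_le_lintegral_sum I _
    _ ≤ ∫⁻ y, N * h y ∂μ := by
        refine lintegral_mono fun y => ?_
        rw [Finset.sum_indicator_eq_sum_filter, Finset.sum_const, nsmul_eq_mul]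
        exact mul_le_mul_left (hN y) _
    _ = N * ∫⁻ y, h y ∂μ := lintegral_const_mul' _ _ ENNReal.coe_ne_top

end Average

section Geometry

variable {α : Type*} [PseudoMetricSpace α]

theorem diam_le_mul_dist_of_inv_mul_diam_le_infDist {A : Set α} {x y : α} {M : ℝ} (hM : 0 < M)
    (h : M⁻¹ * diam A ≤ infDist x A) (hy : y ∈ A) : diam A ≤ M * dist x y := by
  rw [← inv_mul_le_iff₀ hM]
  exact h.trans (infDist_le_dist_of_mem hy)

theorem ball_dist_subset_ball_of_infDist_le {x y c : α} {ρ M : ℝ} (hM : 0 ≤ M)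
    (h : infDist x (ball c ρ) ≤ M * diam (ball c ρ)) (hy : y ∈ ball c ρ) :
    ball x (dist x y) ⊆ ball c ((4 * M + 5) * ρ) := by
  have hρ : 0 < ρ := dist_nonneg.trans_lt hy
  have hD : diam (ball c ρ) ≤ 2 * ρ := diam_ball hρ.le
  have hxc : dist x c ≤ (M + 1) * (2 * ρ) := by
    have := dist_le_infDist_add_diam (x := x) (isBounded_ball : Bornology.IsBounded (ball c ρ))
      (mem_ball_self hρ)
    nlinarith
  intro w hw
  rw [mem_ball] at hw hy ⊢
  linarith [dist_triangle w x c, dist_triangle x c y, dist_comm c y]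

end Geometry

theorem integrableOn_ball_of_lipschitzWith {α : Type*} [PseudoMetricSpace α] [MeasurableSpace α]
    [OpensMeasurableSpace α] {μ : Measure α} {f : α → ℝ} {K : ℝ≥0}
    (hf : LipschitzWith K f) {c : α} {ρ : ℝ} (h : μ (ball c ρ) ≠ ∞) :
    IntegrableOn f (ball c ρ) μ := by
  refine Measure.integrableOn_of_bounded h hf.continuous.aestronglyMeasurable
    (M := |f c| + K * ρ) (ae_restrict_of_forall_mem measurableSet_ball fun y hy => ?_)
  have hfy : |f y - f c| ≤ K * ρ := by
    rw [← Real.dist_eq]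
    exact (hf.dist_le_mul y c).trans (by gcongr; exact (mem_ball.mp hy).le)
  rw [Real.norm_eq_abs]
  linarith [abs_sub_abs_le_abs_sub (f y) (f c)]

/-- The function `g` of the paper. -/
def fracGradient {α : Type*} [MetricSpace α] [MeasurableSpace α] (μ : Measure α) (s t : ℝ)
    (f : α → ℝ) (y : α) : ℝ≥0∞ :=
  fracEnergyKernel μ s t f y ^ (1 / t)

def meanOscillation {α : Type*} [MeasurableSpace α] (μ : Measure α) (f : α → ℝ) (A : Set α) :
    ℝ≥0∞ :=
  ⨍⁻ y in A, edist (f y) (⨍ z in A, f z ∂μ) ∂μ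

section MetricMeasure

variable {α : Type*} [MetricSpace α] [MeasurableSpace α] {μ : Measure α} {s t C : ℝ}

theorem Doubling.exists_one_le (h : Doubling μ) : ∃ C, 1 ≤ C ∧ DoublingWith μ C := by
  obtain ⟨C, -, hC⟩ := h
  refine ⟨max C 1, le_max_right _ _, fun x r hr => (hC x r hr).trans ?_⟩
  gcongr
  exact le_max_left _ _

theorem DoublingWith.measure_ball_two_pow_mul_le (h : DoublingWith μ C) (x : α) {r : ℝ}
    (hr : 0 < r) (n : ℕ) : μ (ball x (2 ^ n * r)) ≤ ENNReal.ofReal C ^ n * μ (ball x r) := by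
  induction n with
  | zero => simp
  | succ n ih =>
    calc μ (ball x (2 ^ (n + 1) * r)) = μ (ball x (2 * (2 ^ n * r))) := by ring_nf
      _ ≤ ENNReal.ofReal C * μ (ball x (2 ^ n * r)) := h x _ (by positivity)
      _ ≤ ENNReal.ofReal C * (ENNReal.ofReal C ^ n * μ (ball x r)) := by gcongr
      _ = ENNReal.ofReal C ^ (n + 1) * μ (ball x r) := by ring

theorem DoublingWith.measure_le_of_subset_ball (h : DoublingWith μ C) {A : Set α} {x : α}
    {a r : ℝ} (hr : 0 < r) {n : ℕ} (ha : a ≤ 2 ^ n) (hA : A ⊆ ball x (a * r)) :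
    μ A ≤ ENNReal.ofReal C ^ n * μ (ball x r) :=
  (measure_mono (hA.trans (ball_subset_ball (by gcongr)))).trans
    (h.measure_ball_two_pow_mul_le x hr n)

theorem diam_pos_of_measure_ne_zero [NullSingletonClass μ] {A : Set α}
    (hA : Bornology.IsBounded A) (h : μ A ≠ 0) : 0 < diam A :=
  diam_pos (not_subsingleton_iff.mp fun hs => h (hs.measure_zero μ)) hA

theorem ofReal_rpow_abs_sub_le_mul_div (hballs : BallsPosFinite μ) (hs : 0 ≤ s) (ht : 0 < t)
    (f : α → ℝ) {y z : α} {D : ℝ} {L : ℝ≥0∞} (hD : dist y z ≤ D)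
    (hμ : μ (ball y (dist y z)) ≤ L) :
    ENNReal.ofReal (|f y - f z| ^ t) ≤ ENNReal.ofReal (D ^ (s * t)) * L *
      (ENNReal.ofReal (|f y - f z| ^ t) /
        (ENNReal.ofReal (dist y z ^ (s * t)) * μ (ball y (dist y z)))) := by
  rcases eq_or_ne y z with rfl | hyz
  · simp [Real.zero_rpow ht.ne']
  have hd : 0 < dist y z := dist_pos.mpr hyz
  set den := ENNReal.ofReal (dist y z ^ (s * t)) * μ (ball y (dist y z))
  have hden0 : den ≠ 0 := mul_ne_zero (by positivity) (hballs y _ hd).1.ne'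
  have hden : den ≠ ∞ := ENNReal.mul_ne_top ENNReal.ofReal_ne_top (hballs y _ hd).2.ne
  calc ENNReal.ofReal (|f y - f z| ^ t) = den * (ENNReal.ofReal (|f y - f z| ^ t) / den) :=
        (ENNReal.mul_div_cancel hden0 hden).symm
    _ ≤ _ := mul_le_mul_left (mul_le_mul' (ENNReal.ofReal_le_ofReal
        (Real.rpow_le_rpow dist_nonneg hD (by positivity))) hμ) _

theorem setLAverage_ofReal_rpow_le_fracEnergyKernel (hballs : BallsPosFinite μ) (hs : 0 ≤ s)
    (ht : 0 < t) (f : α → ℝ) {A : Set α} (hA : MeasurableSet A) (hA0 : μ A ≠ 0)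
    (hAfin : μ A ≠ ∞) {y : α} {D : ℝ} {L : ℝ≥0∞} (hL : L ≠ ∞) (hD : ∀ z ∈ A, dist y z ≤ D)
    (hμ : ∀ z ∈ A, μ (ball y (dist y z)) ≤ L * μ A) :
    ⨍⁻ z in A, ENNReal.ofReal (|f y - f z| ^ t) ∂μ ≤
      ENNReal.ofReal (D ^ (s * t)) * L * fracEnergyKernel μ s t f y := by
  rw [setLAverage_eq]
  calc (∫⁻ z in A, ENNReal.ofReal (|f y - f z| ^ t) ∂μ) / μ A
      ≤ (∫⁻ z in A, ENNReal.ofReal (D ^ (s * t)) * (L * μ A) *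
          (ENNReal.ofReal (|f y - f z| ^ t) /
            (ENNReal.ofReal (dist y z ^ (s * t)) * μ (ball y (dist y z)))) ∂μ) / μ A := by
        gcongr ?_ / _
        exact setLIntegral_mono' hA fun z hz =>
          ofReal_rpow_abs_sub_le_mul_div hballs hs ht f (hD z hz) (hμ z hz)
    _ ≤ ENNReal.ofReal (D ^ (s * t)) * (L * μ A) * fracEnergyKernel μ s t f y / μ A := by
        rw [lintegral_const_mul' _ _ (by finiteness)]
        gcongr
        exact setLIntegral_le_lintegral _ _
    _ = ENNReal.ofReal (D ^ (s * t)) * L * fracEnergyKernel μ s t f y := by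
        rw [← mul_assoc, mul_right_comm _ (μ A), ENNReal.mul_div_cancel_right hA0 hAfin]

theorem edist_setAverage_ball_le_fracGradient [OpensMeasurableSpace α] (hballs : BallsPosFinite μ)
    {C : ℝ} (hC : 1 ≤ C) (hdw : DoublingWith μ C) (hs : 0 ≤ s) (ht : 1 ≤ t) {f : α → ℝ}
    {K : ℝ≥0} (hf : LipschitzWith K f) {c y : α} {ρ : ℝ} (hy : y ∈ ball c ρ) :
    edist (f y) (⨍ z in ball c ρ, f z ∂μ) ≤
      ENNReal.ofReal (diam (ball c ρ) ^ s) * ENNReal.ofReal C ^ 2 * fracGradient μ s t f y := by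
  have hρ : 0 < ρ := dist_nonneg.trans_lt hy
  have ht0 : 0 < t := zero_lt_one.trans_le ht
  have hB0 : μ (ball c ρ) ≠ 0 := (hballs c ρ hρ).1.ne'
  have hBfin : μ (ball c ρ) ≠ ∞ := (hballs c ρ hρ).2.ne
  have hker := setLAverage_ofReal_rpow_le_fracEnergyKernel hballs hs ht0 f measurableSet_ball
    hB0 hBfin (L := ENNReal.ofReal C ^ 2) (by finiteness)
    (fun z hz => dist_le_diam_of_mem isBounded_ball hy hz) fun z hz => by
      refine hdw.measure_le_of_subset_ball hρ (a := 4) (by norm_num) fun w hw => ?_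
      rw [mem_ball] at hw hy hz ⊢
      linarith [dist_triangle w y c, dist_triangle y c z, dist_comm c z]
  have h1t : 0 ≤ 1 / t := by positivity
  have hC2 : (ENNReal.ofReal C ^ 2) ^ (1 / t) ≤ ENNReal.ofReal C ^ 2 := by
    simpa using ENNReal.rpow_le_rpow_of_exponent_le
      (one_le_pow₀ (ENNReal.one_le_ofReal.mpr hC)) (div_le_one_of_le₀ ht ht0.le)
  calc edist (f y) (⨍ z in ball c ρ, f z ∂μ) ≤ ⨍⁻ z in ball c ρ, edist (f y) (f z) ∂μ :=
        edist_setAverage_le hB0 hBfin (integrableOn_ball_of_lipschitzWith hf hBfin) (f y)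
    _ ≤ (⨍⁻ z in ball c ρ, edist (f y) (f z) ^ t ∂μ) ^ (1 / t) :=
        setLAverage_le_setLAverage_rpow hB0 hBfin
          (continuous_const.edist hf.continuous).measurable.aemeasurable ht
    _ = (⨍⁻ z in ball c ρ, ENNReal.ofReal (|f y - f z| ^ t) ∂μ) ^ (1 / t) := by
        simp_rw [edist_dist, Real.dist_eq, ENNReal.ofReal_rpow_of_nonneg (abs_nonneg _) ht0.le]
    _ ≤ (ENNReal.ofReal (diam (ball c ρ) ^ (s * t)) * ENNReal.ofReal C ^ 2 *
          fracEnergyKernel μ s t f y) ^ (1 / t) := by gcongr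
    _ ≤ ENNReal.ofReal (diam (ball c ρ) ^ s) * ENNReal.ofReal C ^ 2 *
          fracGradient μ s t f y := by
        rw [fracGradient, ENNReal.mul_rpow_of_nonneg _ _ h1t, ENNReal.mul_rpow_of_nonneg _ _ h1t,
          ENNReal.ofReal_rpow_of_nonneg (by positivity) h1t, ← Real.rpow_mul diam_nonneg,
          show s * t * (1 / t) = s by field_simp]
        gcongr

theorem inv_measure_mul_diam_rpow_le [NullSingletonClass μ] (hballs : BallsPosFinite μ)
    (hdw : DoublingWith μ C) (hs : 0 ≤ s) {M : ℝ} (hM : 0 < M) {n : ℕ}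
    (hn : 4 * M + 5 ≤ 2 ^ n) {x c y : α} {ρ : ℝ} (hy : y ∈ ball c ρ)
    (hB1 : M⁻¹ * diam (ball c ρ) ≤ infDist x (ball c ρ))
    (hB2 : infDist x (ball c ρ) ≤ M * diam (ball c ρ)) :
    (μ (ball c ρ))⁻¹ * ENNReal.ofReal (diam (ball c ρ) ^ s) ≤
      ENNReal.ofReal (M ^ s) * ENNReal.ofReal C ^ n *
        (ENNReal.ofReal (dist x y ^ s) / μ (ball x (dist x y))) := by
  have hρ : 0 < ρ := dist_nonneg.trans_lt hy
  have hB0 : μ (ball c ρ) ≠ 0 := (hballs c ρ hρ).1.ne'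
  have hD : 0 < diam (ball c ρ) := diam_pos_of_measure_ne_zero isBounded_ball hB0
  have hd : 0 < dist x y :=
    (by positivity : 0 < M⁻¹ * diam (ball c ρ)).trans_le (hB1.trans (infDist_le_dist_of_mem hy))
  have hinv : (μ (ball c ρ))⁻¹ ≤ ENNReal.ofReal C ^ n / μ (ball x (dist x y)) :=
    ENNReal.inv_le_div_of_le_mul hB0 (hballs c ρ hρ).2.ne (hballs x _ hd).1.ne'
      (hballs x _ hd).2.ne
      (hdw.measure_le_of_subset_ball hρ hn (ball_dist_subset_ball_of_infDist_le hM.le hB2 hy))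
  have hDs : ENNReal.ofReal (diam (ball c ρ) ^ s) ≤
      ENNReal.ofReal (M ^ s) * ENNReal.ofReal (dist x y ^ s) := by
    rw [← ENNReal.ofReal_mul (by positivity), ← Real.mul_rpow hM.le dist_nonneg]
    gcongr
    exact diam_le_mul_dist_of_inv_mul_diam_le_infDist hM hB1 hy
  calc (μ (ball c ρ))⁻¹ * ENNReal.ofReal (diam (ball c ρ) ^ s)
      ≤ ENNReal.ofReal C ^ n / μ (ball x (dist x y)) *
          (ENNReal.ofReal (M ^ s) * ENNReal.ofReal (dist x y ^ s)) := by gcongr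
    _ = _ := by simp only [div_eq_mul_inv]; ring

theorem meanOscillation_ball_le_setLIntegral [OpensMeasurableSpace α] [NullSingletonClass μ]
    (hballs : BallsPosFinite μ) (hC : 1 ≤ C) (hdw : DoublingWith μ C) (hs : 0 ≤ s)
    (ht : 1 ≤ t) {f : α → ℝ} {K : ℝ≥0} (hf : LipschitzWith K f) {M : ℝ} (hM : 0 < M) {n : ℕ}
    (hn : 4 * M + 5 ≤ 2 ^ n) {x c : α} {ρ : ℝ} (hρ : 0 < ρ)
    (hB1 : M⁻¹ * diam (ball c ρ) ≤ infDist x (ball c ρ))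
    (hB2 : infDist x (ball c ρ) ≤ M * diam (ball c ρ)) :
    meanOscillation μ f (ball c ρ) ≤ ENNReal.ofReal (M ^ s) * ENNReal.ofReal C ^ (n + 2) *
      ∫⁻ y in ball c ρ, fracGradient μ s t f y * ENNReal.ofReal (dist x y ^ s) /
        μ (ball x (dist x y)) ∂μ := by
  rw [meanOscillation, setLAverage_eq, ENNReal.div_eq_inv_mul,
    ← lintegral_const_mul' _ _ (ENNReal.inv_ne_top.mpr (hballs c ρ hρ).1.ne'),
    ← lintegral_const_mul' _ _ (by finiteness)]
  refine setLIntegral_mono' measurableSet_ball fun y hy => ?_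
  calc (μ (ball c ρ))⁻¹ * edist (f y) (⨍ z in ball c ρ, f z ∂μ)
      ≤ (μ (ball c ρ))⁻¹ * (ENNReal.ofReal (diam (ball c ρ) ^ s) * ENNReal.ofReal C ^ 2 *
          fracGradient μ s t f y) := by
        gcongr
        exact edist_setAverage_ball_le_fracGradient hballs hC hdw hs ht hf hy
    _ = ENNReal.ofReal C ^ 2 * fracGradient μ s t f y *
          ((μ (ball c ρ))⁻¹ * ENNReal.ofReal (diam (ball c ρ) ^ s)) := by ring
    _ ≤ ENNReal.ofReal C ^ 2 * fracGradient μ s t f y * (ENNReal.ofReal (M ^ s) *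
          ENNReal.ofReal C ^ n * (ENNReal.ofReal (dist x y ^ s) / μ (ball x (dist x y)))) :=
        mul_le_mul_right (inv_measure_mul_diam_rpow_le hballs hdw hs hM hn hy hB1 hB2) _
    _ = _ := by simp only [div_eq_mul_inv]; ring

theorem edist_setAverage_le_meanOscillation_of_subset [OpensMeasurableSpace α]
    (hballs : BallsPosFinite μ) (hdw : DoublingWith μ C) {f : α → ℝ} {K : ℝ≥0}
    (hf : LipschitzWith K f) {z c : α} {τ ρ a : ℝ} (hτ : 0 < τ) {n : ℕ} (ha : a ≤ 2 ^ n)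
    (hS : ball z τ ⊆ ball c ρ) (hB : ball c ρ ⊆ ball z (a * τ)) :
    edist (⨍ y in ball c ρ, f y ∂μ) (⨍ y in ball z τ, f y ∂μ) ≤
      ENNReal.ofReal C ^ n * meanOscillation μ f (ball c ρ) := by
  have hρ : 0 < ρ := dist_nonneg.trans_lt (hS (mem_ball_self hτ))
  have hSfin : μ (ball z τ) ≠ ∞ := (hballs z τ hτ).2.ne
  calc edist (⨍ y in ball c ρ, f y ∂μ) (⨍ y in ball z τ, f y ∂μ)
      ≤ ⨍⁻ y in ball z τ, edist (⨍ y in ball c ρ, f y ∂μ) (f y) ∂μ :=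
        edist_setAverage_le (hballs z τ hτ).1.ne' hSfin
          (integrableOn_ball_of_lipschitzWith hf hSfin) _
    _ ≤ μ (ball c ρ) / μ (ball z τ) *
          ⨍⁻ y in ball c ρ, edist (⨍ y in ball c ρ, f y ∂μ) (f y) ∂μ :=
        setLAverage_le_div_mul_setLAverage hS (hballs c ρ hρ).1.ne' (hballs c ρ hρ).2.ne _
    _ ≤ ENNReal.ofReal C ^ n * meanOscillation μ f (ball c ρ) := by
        simp_rw [meanOscillation, edist_comm (f _)]
        gcongr
        exact ENNReal.div_le_of_le_mul (hdw.measure_le_of_subset_ball hτ ha hB)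

theorem edist_setAverage_le_meanOscillation_add [OpensMeasurableSpace α]
    (hballs : BallsPosFinite μ) (hdw : DoublingWith μ C) {f : α → ℝ} {K : ℝ≥0}
    (hf : LipschitzWith K f) {z c c' : α} {τ ρ ρ' a : ℝ} (hτ : 0 < τ) {n : ℕ} (ha : a ≤ 2 ^ n)
    (hS : ball z τ ⊆ ball c ρ ∩ ball c' ρ') (hB : ball c ρ ∪ ball c' ρ' ⊆ ball z (a * τ)) :
    edist (⨍ y in ball c ρ, f y ∂μ) (⨍ y in ball c' ρ', f y ∂μ) ≤
      ENNReal.ofReal C ^ n *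
        (meanOscillation μ f (ball c ρ) + meanOscillation μ f (ball c' ρ')) := by
  rw [mul_add]
  exact (edist_triangle_right _ _ (⨍ y in ball z τ, f y ∂μ)).trans (add_le_add
    (edist_setAverage_le_meanOscillation_of_subset hballs hdw hf hτ ha
      (hS.trans inter_subset_left) (subset_union_left.trans hB))
    (edist_setAverage_le_meanOscillation_of_subset hballs hdw hf hτ ha
      (hS.trans inter_subset_right) (subset_union_right.trans hB)))

theorem edist_setAverage_le_of_ball_subset [OpensMeasurableSpace α] (hballs : BallsPosFinite μ)
    {f : α → ℝ} {K : ℝ≥0} (hf : LipschitzWith K f) {x c : α} {ρ r : ℝ} (hρ : 0 < ρ)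
    (hB : ball c ρ ⊆ ball x r) :
    edist (f x) (⨍ y in ball c ρ, f y ∂μ) ≤ K * ENNReal.ofReal r := by
  have hB0 : μ (ball c ρ) ≠ 0 := (hballs c ρ hρ).1.ne'
  have hBfin : μ (ball c ρ) ≠ ∞ := (hballs c ρ hρ).2.ne
  calc edist (f x) (⨍ y in ball c ρ, f y ∂μ) ≤ ⨍⁻ y in ball c ρ, edist (f x) (f y) ∂μ :=
        edist_setAverage_le hB0 hBfin (integrableOn_ball_of_lipschitzWith hf hBfin) _
    _ ≤ ⨍⁻ _ in ball c ρ, K * ENNReal.ofReal r ∂μ := by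
        refine laverage_mono_ae (ae_restrict_of_forall_mem measurableSet_ball fun y hy => ?_)
        exact (hf.edist_le_mul x y).trans
          (mul_le_mul_right (edist_lt_ofReal.mpr (mem_ball'.mp (hB hy))).le _)
    _ = K * ENNReal.ofReal r := setLAverage_const hB0 hBfin _

theorem ofReal_abs_le_sum_meanOscillation_of_chain [OpensMeasurableSpace α]
    (hballs : BallsPosFinite μ) (hdw : DoublingWith μ C) {f : α → ℝ} {K : ℝ≥0}
    (hf : LipschitzWith K f) {M : ℝ} {n : ℕ} (hMn : M ≤ 2 ^ n) {x : α} {r : ℝ} {k : ℕ}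
    {c : ℕ → α} {ρ : ℕ → ℝ} (hρ : ∀ i ≤ k, 0 < ρ i) (h0 : ∀ y ∈ ball (c 0) (ρ 0), f y = 0)
    (hk : ball (c k) (ρ k) ⊆ ball x r)
    (hlink : ∀ i < k, ∃ (z : α) (τ : ℝ), 0 < τ ∧
      ball z τ ⊆ ball (c i) (ρ i) ∩ ball (c (i + 1)) (ρ (i + 1)) ∧
      ball (c i) (ρ i) ∪ ball (c (i + 1)) (ρ (i + 1)) ⊆ ball z (M * τ)) :
    ENNReal.ofReal |f x| ≤ K * ENNReal.ofReal r + 2 * ENNReal.ofReal C ^ n *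
      ∑ i ∈ Finset.range (k + 1), meanOscillation μ f (ball (c i) (ρ i)) := by
  set A : ℕ → ℝ := fun i => ⨍ y in ball (c i) (ρ i), f y ∂μ
  have hA0 : A 0 = 0 := by
    rw [← average_zero (μ := μ.restrict (ball (c 0) (ρ 0)))]
    exact setAverage_congr_fun measurableSet_ball (ae_of_all _ h0)
  calc ENNReal.ofReal |f x| = edist (f x) (A 0) := by rw [hA0, edist_dist, Real.dist_eq, sub_zero]
    _ ≤ edist (f x) (A k) + edist (A 0) (A k) := edist_triangle_right _ _ _
    _ ≤ K * ENNReal.ofReal r + ∑ i ∈ Finset.range k, edist (A i) (A (i + 1)) :=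
        add_le_add (edist_setAverage_le_of_ball_subset hballs hf (hρ k le_rfl) hk)
          (edist_le_range_sum_edist A k)
    _ ≤ K * ENNReal.ofReal r + ∑ i ∈ Finset.range k, ENNReal.ofReal C ^ n *
          (meanOscillation μ f (ball (c i) (ρ i)) +
            meanOscillation μ f (ball (c (i + 1)) (ρ (i + 1)))) := by
        gcongr with i hi
        obtain ⟨z, τ, hτ, hS, hB⟩ := hlink i (Finset.mem_range.mp hi)
        exact edist_setAverage_le_meanOscillation_add hballs hdw hf hτ hMn hS hB
    _ ≤ _ := by
        rw [← Finset.mul_sum, mul_comm 2, mul_assoc]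
        gcongr
        exact ENNReal.sum_range_add_succ_le_two_mul _ k

theorem sum_meanOscillation_le_rieszPotential [OpensMeasurableSpace α] [NullSingletonClass μ]
    (hballs : BallsPosFinite μ) (hC : 1 ≤ C) (hdw : DoublingWith μ C) (hs : 0 ≤ s)
    (ht : 1 ≤ t) {f : α → ℝ} {K : ℝ≥0} (hf : LipschitzWith K f) {M : ℝ} (hM : 0 < M) {n : ℕ}
    (hn : 4 * M + 5 ≤ 2 ^ n) {x : α} {k : ℕ} {c : ℕ → α} {ρ : ℕ → ℝ} (hρ : ∀ i ≤ k, 0 < ρ i)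
    (hdist : ∀ i ≤ k,
      M⁻¹ * diam (ball (c i) (ρ i)) ≤ infDist x (ball (c i) (ρ i)) ∧
      infDist x (ball (c i) (ρ i)) ≤ M * diam (ball (c i) (ρ i)))
    (hoverlap : ∀ y : α, (({i : ℕ | i ≤ k ∧ y ∈ ball (c i) (ρ i)}).ncard : ℝ) ≤ M) :
    ∑ i ∈ Finset.range (k + 1), meanOscillation μ f (ball (c i) (ρ i)) ≤
      ENNReal.ofReal (M ^ s) * ENNReal.ofReal C ^ (n + 2) *
        (ENNReal.ofReal M * rieszPotential μ s (fracGradient μ s t f) x) := by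
  classical
  have hcard : ∀ y, (((Finset.range (k + 1)).filter fun i => y ∈ ball (c i) (ρ i)).card : ℝ≥0∞)
      ≤ M.toNNReal := by
    intro y
    have hset : (((Finset.range (k + 1)).filter fun i => y ∈ ball (c i) (ρ i)) : Set ℕ) =
        {i : ℕ | i ≤ k ∧ y ∈ ball (c i) (ρ i)} := by
      ext i
      simp
    rw [← ENNReal.ofReal_natCast, ← Set.ncard_coe_finset, hset]
    exact ENNReal.ofReal_le_ofReal (hoverlap y)
  calc ∑ i ∈ Finset.range (k + 1), meanOscillation μ f (ball (c i) (ρ i))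
      ≤ ∑ i ∈ Finset.range (k + 1), ENNReal.ofReal (M ^ s) * ENNReal.ofReal C ^ (n + 2) *
          ∫⁻ y in ball (c i) (ρ i), fracGradient μ s t f y * ENNReal.ofReal (dist x y ^ s) /
            μ (ball x (dist x y)) ∂μ := by
        gcongr with i hi
        have hik : i ≤ k := Nat.lt_succ_iff.mp (Finset.mem_range.mp hi)
        exact meanOscillation_ball_le_setLIntegral hballs hC hdw hs ht hf hM hn (hρ i hik)
          (hdist i hik).1 (hdist i hik).2
    _ ≤ _ := by
        rw [← Finset.mul_sum]
        gcongr
        exact sum_setLIntegral_le_mul_lintegral _ (fun i _ => measurableSet_ball) hcard _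

end MetricMeasure

theorem abs_le_rieszPotential_fracEnergy_general
    (μ : Measure X) (s : ℝ) (hs0 : 0 < s)
    (hsa : StandingAssumptions μ) (hballs : BallsPosFinite μ) (hdbl : Doubling μ)
    (hchain : ChainCondition X 1)
    (t : ℝ) (ht : 1 ≤ t) :
    ∃ C : ℝ, 0 < C ∧ ∀ f : X → ℝ, MemLip0 f → ∀ x : X,
      ENNReal.ofReal |f x| ≤
        ENNReal.ofReal C *
          rieszPotential μ s (fun y => fracEnergyKernel μ s t f y ^ (1 / t)) x := by
  obtain ⟨CD, hCD, hdw⟩ := hdbl.exists_one_le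
  obtain ⟨M, hM, hch⟩ := hchain
  obtain ⟨n, hn⟩ := pow_unbounded_of_one_lt (4 * M + 5) (one_lt_two (α := ℝ))
  have : NullSingletonClass μ := ⟨hsa.2.1⟩
  refine ⟨2 * CD ^ n * (M ^ s * CD ^ (n + 2) * M), by positivity,
    fun f ⟨⟨K, hf⟩, x₀, r₀, hsupp⟩ x => ?_⟩
  have hR : 0 < dist x x₀ + |r₀| + 1 := by positivity
  refine ENNReal.le_of_forall_le_coe_mul_ofReal_add (K := K) hR fun r hr hrR => ?_
  obtain ⟨k, c, ρ, hρ, h0, hk, hdist, hlink, hoverlap⟩ := hch x r _ hr hrR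
  simp only [one_mul] at h0 hk hdist hoverlap
  have hf0 : ∀ y ∈ ball (c 0) (ρ 0), f y = 0 := fun y hy => hsupp y fun hy₀ =>
    h0 hy (ball_subset_ball' (by rw [dist_comm]; linarith [le_abs_self r₀]) hy₀)
  calc ENNReal.ofReal |f x|
      ≤ K * ENNReal.ofReal r + 2 * ENNReal.ofReal CD ^ n *
          ∑ i ∈ Finset.range (k + 1), meanOscillation μ f (ball (c i) (ρ i)) :=
        ofReal_abs_le_sum_meanOscillation_of_chain hballs hdw hf (by linarith) hρ hf0 hk hlink
    _ ≤ K * ENNReal.ofReal r + 2 * ENNReal.ofReal CD ^ n *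
          (ENNReal.ofReal (M ^ s) * ENNReal.ofReal CD ^ (n + 2) *
            (ENNReal.ofReal M * rieszPotential μ s (fracGradient μ s t f) x)) := by
        gcongr
        exact sum_meanOscillation_le_rieszPotential hballs hCD hdw hs0.le ht hf (by linarith)
          hn.le hρ hdist hoverlap
    _ = K * ENNReal.ofReal r + ENNReal.ofReal (2 * CD ^ n * (M ^ s * CD ^ (n + 2) * M)) *
          rieszPotential μ s (fracGradient μ s t f) x := by
        rw [ENNReal.ofReal_mul (by positivity), ENNReal.ofReal_mul (by positivity),
          ENNReal.ofReal_mul (by positivity), ENNReal.ofReal_mul (by positivity),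
          ENNReal.ofReal_pow (by positivity), ENNReal.ofReal_pow (by positivity),
          ENNReal.ofReal_ofNat]
        ring

theorem abs_le_rieszPotential_fracEnergy [Nontrivial X]
    (μ : Measure X) (s : ℝ) (hs0 : 0 < s) (hs1 : s < 1)
    (hsa : StandingAssumptions μ) (hballs : BallsPosFinite μ) (hdbl : Doubling μ)
    (hchain : ChainCondition X 1) (hrev : ReverseDoubling μ s)
    (t : ℝ) (ht : 1 ≤ t) :
    ∃ C : ℝ, 0 < C ∧ ∀ f : X → ℝ, MemLip0 f → ∀ x : X,
      ENNReal.ofReal |f x| ≤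
        ENNReal.ofReal C *
          rieszPotential μ s (fun y => fracEnergyKernel μ s t f y ^ (1 / t)) x :=
  abs_le_rieszPotential_fracEnergy_general μ s hs0 hsa hballs hdbl hchain t ht

end
end ApDistance
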